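/- Let p, a, b, u, V, W : ℝ² → ℝ be smooth with u = a_y + p² = b_x + p², V = p_y + bp + (1/2)a² − a_x, W = p_x + ap + (1/2)b² − b_y, and suppose a smooth ν : ℝ² → ℝ³ satisfies ν_xy = uν, ν_xx = a ν_x − p ν_y + (p_y + pb)ν, ν_yy = −p ν_x + b ν_y + (p_x + pa)ν. Assume additionally the isothermally asymptotic Gauss–Codazzi equations: (p_x + ap + (1/2)b² − b_y)_x = (3/2)(p²)_y, (p_y + bp + (1/2)a² − a_x)_y = (3/2)(p²)_x, a_y = b_x. Then ν satisfies the third-order equation ν_xxx − 3v ν_x = ν_yyy − 3w ν_y, where v = (2/3)V + a_x and w = (2/3)W + b_y. -/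

import Mathlib

noncomputable def px {E : Type*} [NormedAddCommGroup E] [NormedSpace ℝ E]
    (f : ℝ → ℝ → E) : ℝ → ℝ → E := fun x y => deriv (fun x' => f x' y) x

noncomputable def py {E : Type*} [NormedAddCommGroup E] [NormedSpace ℝ E]
    (f : ℝ → ℝ → E) : ℝ → ℝ → E := fun x y => deriv (fun y' => f x y') y

def Smooth2 {E : Type*} [NormedAddCommGroup E] [NormedSpace ℝ E]
    (f : ℝ → ℝ → E) : Prop := ContDiff ℝ (⊤ : ℕ∞) (fun q : ℝ × ℝ => f q.1 q.2)

section helpers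
variable {E : Type*} [NormedAddCommGroup E] [NormedSpace ℝ E] {f : ℝ → ℝ → E}

lemma diffx (hf : Smooth2 f) (x y : ℝ) : DifferentiableAt ℝ (fun x' => f x' y) x := by
  have h := hf.differentiable (by simp)
  exact (h (x, y)).comp x ((differentiableAt_id.prodMk (differentiableAt_const y) : DifferentiableAt ℝ (fun x' : ℝ => (x', y)) x))

lemma diffy (hf : Smooth2 f) (x y : ℝ) : DifferentiableAt ℝ (fun y' => f x y') y := by
  have h := hf.differentiable (by simp)
  exact (h (x, y)).comp y (((differentiableAt_const x).prodMk differentiableAt_id))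

lemma px_eq_fderiv (hf : Smooth2 f) (x y : ℝ) :
    px f x y = fderiv ℝ (fun q : ℝ × ℝ => f q.1 q.2) (x, y) (1, 0) := by
  have hF := (hf.differentiable (by simp)) (x, y)
  have hg : HasDerivAt (fun x' : ℝ => ((x', y) : ℝ × ℝ)) ((1:ℝ), (0:ℝ)) x := by
    simpa using ((hasDerivAt_id x).prodMk (hasDerivAt_const x y))
  exact (hF.hasFDerivAt.comp_hasDerivAt x hg).deriv

lemma py_eq_fderiv (hf : Smooth2 f) (x y : ℝ) :
    py f x y = fderiv ℝ (fun q : ℝ × ℝ => f q.1 q.2) (x, y) (0, 1) := by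
  have hF := (hf.differentiable (by simp)) (x, y)
  have hg : HasDerivAt (fun y' : ℝ => ((x, y') : ℝ × ℝ)) ((0:ℝ), (1:ℝ)) y := by
    simpa using ((hasDerivAt_const y x).prodMk (hasDerivAt_id y))
  exact (hF.hasFDerivAt.comp_hasDerivAt y hg).deriv

lemma smooth2_fderiv_apply (hf : Smooth2 f) (v : ℝ × ℝ) :
    ContDiff ℝ (⊤ : ℕ∞) (fun q : ℝ × ℝ => fderiv ℝ (fun q : ℝ × ℝ => f q.1 q.2) q v) :=
  (hf.fderiv_right (by simp)).clm_apply contDiff_const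

lemma Smooth2.spx (hf : Smooth2 f) : Smooth2 (px f) := by
  have := smooth2_fderiv_apply hf (1, 0)
  unfold Smooth2
  convert this using 2 with q
  exact px_eq_fderiv hf q.1 q.2

lemma Smooth2.spy (hf : Smooth2 f) : Smooth2 (py f) := by
  have := smooth2_fderiv_apply hf (0, 1)
  unfold Smooth2
  convert this using 2 with q
  exact py_eq_fderiv hf q.1 q.2

lemma clairaut (hf : Smooth2 f) (x y : ℝ) : px (py f) x y = py (px f) x y := by
  set F := fun q : ℝ × ℝ => f q.1 q.2 with hF
  have hdF : Differentiable ℝ (fderiv ℝ F) :=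
    (hf.fderiv_right (n := (⊤ : ℕ∞)) (m := (⊤ : ℕ∞)) (by simp)).differentiable (by simp)
  have h1 : px (py f) x y = fderiv ℝ (fderiv ℝ F) (x, y) (1, 0) (0, 1) := by
    have e1 : px (py f) x y = fderiv ℝ (fun q : ℝ × ℝ => py f q.1 q.2) (x, y) (1, 0) :=
      px_eq_fderiv hf.spy x y
    have e2 : (fun q : ℝ × ℝ => py f q.1 q.2) = fun q : ℝ × ℝ => fderiv ℝ F q (0, 1) := by
      funext q; exact py_eq_fderiv hf q.1 q.2
    rw [e1, e2, fderiv_clm_apply (hdF (x, y)) (differentiableAt_const _)]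
    simp
  have h2 : py (px f) x y = fderiv ℝ (fderiv ℝ F) (x, y) (0, 1) (1, 0) := by
    have e1 : py (px f) x y = fderiv ℝ (fun q : ℝ × ℝ => px f q.1 q.2) (x, y) (0, 1) :=
      py_eq_fderiv hf.spx x y
    have e2 : (fun q : ℝ × ℝ => px f q.1 q.2) = fun q : ℝ × ℝ => fderiv ℝ F q (1, 0) := by
      funext q; exact px_eq_fderiv hf q.1 q.2
    rw [e1, e2, fderiv_clm_apply (hdF (x, y)) (differentiableAt_const _)]
    simp
  rw [h1, h2]
  exact (hf.contDiffAt.isSymmSndFDerivAt (by rw [minSmoothness_of_isRCLikeNormedField]; exact WithTop.coe_le_coe.mpr (le_top : (2 : ℕ∞) ≤ ⊤))) _ _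

end helpers

/-- The affine conormal `ν` of an isothermally asymptotic surface satisfies the
stationary VN linear problem `ν_xxx - 3v ν_x = ν_yyy - 3w ν_y` with
`v = (2/3)V + a_x`, `w = (2/3)W + b_y`. -/
theorem conormal_satisfies_sVN_linear_problem
    (p a b u V W v w : ℝ → ℝ → ℝ) (ν : ℝ → ℝ → (Fin 3 → ℝ))
    (hp : Smooth2 p) (ha : Smooth2 a) (hb : Smooth2 b) (hν : Smooth2 ν)
    (hu1 : ∀ x y, u x y = py a x y + (p x y) ^ 2)
    (hu2 : ∀ x y, u x y = px b x y + (p x y) ^ 2)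
    (hV : ∀ x y, V x y = py p x y + b x y * p x y + (1/2) * (a x y) ^ 2 - px a x y)
    (hW : ∀ x y, W x y = px p x y + a x y * p x y + (1/2) * (b x y) ^ 2 - py b x y)
    (hνxy : ∀ x y, px (py ν) x y = u x y • ν x y)
    (hνxx : ∀ x y, px (px ν) x y =
      a x y • px ν x y - p x y • py ν x y + (py p x y + p x y * b x y) • ν x y)
    (hνyy : ∀ x y, py (py ν) x y =
      (-(p x y)) • px ν x y + b x y • py ν x y + (px p x y + p x y * a x y) • ν x y)
    (hGC1 : ∀ x y, px (fun x y => px p x y + a x y * p x y + (1/2) * (b x y) ^ 2 - py b x y) x y =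
      (3/2) * py (fun x y => (p x y) ^ 2) x y)
    (hGC2 : ∀ x y, py (fun x y => py p x y + b x y * p x y + (1/2) * (a x y) ^ 2 - px a x y) x y =
      (3/2) * px (fun x y => (p x y) ^ 2) x y)
    (hGC3 : ∀ x y, py a x y = px b x y)
    (hv : ∀ x y, v x y = (2/3) * V x y + px a x y)
    (hw : ∀ x y, w x y = (2/3) * W x y + py b x y) :
    ∀ x y, px (px (px ν)) x y - (3 * v x y) • px ν x y =
      py (py (py ν)) x y - (3 * w x y) • py ν x y := by
  intro x y
  -- x-direction derivatives (HasDerivAt facts)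
  have Ha : HasDerivAt (fun x' => a x' y) (px a x y) x := (diffx ha x y).hasDerivAt
  have Hb : HasDerivAt (fun x' => b x' y) (px b x y) x := (diffx hb x y).hasDerivAt
  have Hp : HasDerivAt (fun x' => p x' y) (px p x y) x := (diffx hp x y).hasDerivAt
  have Hpyp : HasDerivAt (fun x' => py p x' y) (px (py p) x y) x :=
    (diffx hp.spy x y).hasDerivAt
  have Hn : HasDerivAt (fun x' => ν x' y) (px ν x y) x := (diffx hν x y).hasDerivAt
  have Hnx : HasDerivAt (fun x' => px ν x' y) (px (px ν) x y) x :=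
    (diffx hν.spx x y).hasDerivAt
  have Hny : HasDerivAt (fun x' => py ν x' y) (px (py ν) x y) x :=
    (diffx hν.spy x y).hasDerivAt
  -- y-direction derivatives
  have Ga : HasDerivAt (fun y' => a x y') (py a x y) y := (diffy ha x y).hasDerivAt
  have Gb : HasDerivAt (fun y' => b x y') (py b x y) y := (diffy hb x y).hasDerivAt
  have Gp : HasDerivAt (fun y' => p x y') (py p x y) y := (diffy hp x y).hasDerivAt
  have Gpxp : HasDerivAt (fun y' => px p x y') (py (px p) x y) y :=
    (diffy hp.spx x y).hasDerivAt
  have Gn : HasDerivAt (fun y' => ν x y') (py ν x y) y := (diffy hν x y).hasDerivAt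
  have Gnx : HasDerivAt (fun y' => px ν x y') (py (px ν) x y) y :=
    (diffy hν.spx x y).hasDerivAt
  have Gny : HasDerivAt (fun y' => py ν x y') (py (py ν) x y) y :=
    (diffy hν.spy x y).hasDerivAt
  -- third x-derivative
  have E1 : px (px (px ν)) x y =
      deriv (fun x' => a x' y • px ν x' y - p x' y • py ν x' y
        + (py p x' y + p x' y * b x' y) • ν x' y) x := by
    show deriv (fun x' => px (px ν) x' y) x = _
    congr 1
    funext x'
    exact hνxx x' y
  have HX : HasDerivAt (fun x' => a x' y • px ν x' y - p x' y • py ν x' y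
        + (py p x' y + p x' y * b x' y) • ν x' y)
      ((a x y • px (px ν) x y + px a x y • px ν x y)
        - (p x y • px (py ν) x y + px p x y • py ν x y)
        + ((py p x y + p x y * b x y) • px ν x y
          + (px (py p) x y + (px p x y * b x y + p x y * px b x y)) • ν x y)) x :=
    ((Ha.smul Hnx).sub (Hp.smul Hny)).add ((Hpyp.add (Hp.mul Hb)).smul Hn)
  have EX := E1.trans HX.deriv
  -- third y-derivative
  have F1 : py (py (py ν)) x y =
      deriv (fun y' => (-(p x y')) • px ν x y' + b x y' • py ν x y'
        + (px p x y' + p x y' * a x y') • ν x y') y := by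
    show deriv (fun y' => py (py ν) x y') y = _
    congr 1
    funext y'
    exact hνyy x y'
  have HY : HasDerivAt (fun y' => (-(p x y')) • px ν x y' + b x y' • py ν x y'
        + (px p x y' + p x y' * a x y') • ν x y')
      (((-(p x y)) • py (px ν) x y + (-(py p x y)) • px ν x y)
        + (b x y • py (py ν) x y + py b x y • py ν x y)
        + ((px p x y + p x y * a x y) • py ν x y
          + (py (px p) x y + (py p x y * a x y + p x y * py a x y)) • ν x y)) y :=
    ((Gp.neg.smul Gnx).add (Gb.smul Gny)).add ((Gpxp.add (Gp.mul Ga)).smul Gn)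
  have EY := F1.trans HY.deriv
  -- mixed-derivative symmetry
  have C1 : py (px ν) x y = px (py ν) x y := (clairaut hν x y).symm
  have C2 : py (px p) x y = px (py p) x y := (clairaut hp x y).symm
  rw [EX, EY, C1, C2, hνxx x y, hνxy x y, hνyy x y, hv x y, hw x y, hV x y, hW x y,
    hGC3 x y]
  ext i
  simp only [Pi.add_apply, Pi.sub_apply, Pi.smul_apply, Pi.neg_apply, smul_eq_mul]
  ring
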